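/- arXiv:2508.18133 — 4 statements merged into one kernel-verified Lean document; each statement's English description precedes it below -/
import Mathlib

section
/- The asymmetric matching distance on timed words over the powerset alphabet, d(w,v) = max(d→(w,v), d→(v,w)), satisfies the triangle inequality and is symmetric with d(w,w) = 0, i.e., it is a pseudometric on timed words. -/
open scoped ENNReal

/-- A timed word over the powerset alphabet: a finite sequence of (set of events, timestamp)
pairs with nonnegative, nondecreasing timestamps. -/
def IsTimedWord {σ : Type*} (w : List (Set σ × ℝ)) : Prop :=
  (∀ p ∈ w, 0 ≤ p.2) ∧ List.Chain' (· ≤ ·) (w.map Prod.snd)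

/-- The asymmetric matching distance: max over positions `i` and letters `a ∈ Aᵢ` of the
min over positions `j` with `a ∈ Bⱼ` of `|tᵢ - sⱼ|` (with `min ∅ = ∞`). -/
noncomputable def dArrow {σ : Type*} (w v : List (Set σ × ℝ)) : ℝ≥0∞ :=
  ⨆ i : Fin w.length, ⨆ a : σ, ⨆ _ : a ∈ (w.get i).1,
    ⨅ j : Fin v.length, ⨅ _ : a ∈ (v.get j).1, ENNReal.ofReal |(w.get i).2 - (v.get j).2|

/-- The symmetrized matching distance. -/
noncomputable def tdist {σ : Type*} (w v : List (Set σ × ℝ)) : ℝ≥0∞ :=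
  max (dArrow w v) (dArrow v w)

open Metric

/-!
Each letter `a` singles out the set of times at which it occurs in a word, and `d→(w, v)` is the
supremum over `a` of the directed Hausdorff distance from the occurrence times of `a` in `w` to
those in `v`. A directed Hausdorff distance vanishes on the diagonal and satisfies the triangle
inequality, and both properties survive the supremum over letters and the symmetrization.
-/

section DirectedHausdorff

variable {α : Type*} [PseudoEMetricSpace α] {s t u : Set α} {x : α}

noncomputable def directedHausdorffEDist (s t : Set α) : ℝ≥0∞ :=
  ⨆ x ∈ s, infEDist x t

theorem infEDist_le_directedHausdorffEDist (hx : x ∈ s) :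
    infEDist x t ≤ directedHausdorffEDist s t :=
  le_iSup₂ (f := fun y _ => infEDist y t) x hx

theorem directedHausdorffEDist_self (s : Set α) : directedHausdorffEDist s s = 0 :=
  nonpos_iff_eq_zero.1 <| iSup₂_le fun _ hx => (infEDist_zero_of_mem hx).le

theorem infEDist_le_infEDist_add_directedHausdorffEDist :
    infEDist x u ≤ infEDist x t + directedHausdorffEDist t u := by
  simp only [infEDist, ENNReal.iInf_add]
  exact le_iInf₂ fun y hy => infEDist_le_edist_add_infEDist.trans <|
    add_le_add_right (infEDist_le_directedHausdorffEDist hy) _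

theorem directedHausdorffEDist_triangle (s t u : Set α) :
    directedHausdorffEDist s u ≤ directedHausdorffEDist s t + directedHausdorffEDist t u :=
  iSup₂_le fun _ hx => infEDist_le_infEDist_add_directedHausdorffEDist.trans <|
    add_le_add_left (infEDist_le_directedHausdorffEDist hx) _

end DirectedHausdorff

section TimedWord

variable {σ : Type*}

def occurrenceTimes (w : List (Set σ × ℝ)) (a : σ) : Set ℝ :=
  (fun i : Fin w.length => (w.get i).2) '' {i | a ∈ (w.get i).1}

theorem dArrow_eq_iSup_directedHausdorffEDist (w v : List (Set σ × ℝ)) :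
    dArrow w v = ⨆ a, directedHausdorffEDist (occurrenceTimes w a) (occurrenceTimes v a) := by
  simp only [dArrow, directedHausdorffEDist, occurrenceTimes, infEDist, iSup_image, iInf_image,
    Set.mem_ofPred_eq, edist_dist, Real.dist_eq]
  exact iSup_comm

theorem dArrow_self (w : List (Set σ × ℝ)) : dArrow w w = 0 := by
  simp [dArrow_eq_iSup_directedHausdorffEDist, directedHausdorffEDist_self]

theorem dArrow_triangle (w v u : List (Set σ × ℝ)) :
    dArrow w u ≤ dArrow w v + dArrow v u := by
  simp only [dArrow_eq_iSup_directedHausdorffEDist]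
  exact iSup_le fun a => (directedHausdorffEDist_triangle _ _ _).trans <|
    add_le_add (le_iSup_of_le a le_rfl) (le_iSup_of_le a le_rfl)

theorem tdist_self (w : List (Set σ × ℝ)) : tdist w w = 0 := by
  simp [tdist, dArrow_self]

theorem tdist_comm (w v : List (Set σ × ℝ)) : tdist w v = tdist v w :=
  max_comm _ _

theorem tdist_triangle (w v u : List (Set σ × ℝ)) : tdist w u ≤ tdist w v + tdist v u := by
  refine max_le ((dArrow_triangle w v u).trans ?_) ((dArrow_triangle u v w).trans ?_)
  · exact add_le_add (le_max_left _ _) (le_max_left _ _)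
  · rw [add_comm]
    exact add_le_add (le_max_right _ _) (le_max_right _ _)

end TimedWord

/-- `tdist` is a pseudometric on timed words: zero on the diagonal, symmetric, and
satisfying the triangle inequality, with values in `[0,∞]`. -/
theorem tdist_pseudometric {σ : Type*} :
    (∀ w : List (Set σ × ℝ), IsTimedWord w → tdist w w = 0) ∧
    (∀ w v : List (Set σ × ℝ), IsTimedWord w → IsTimedWord v → tdist w v = tdist v w) ∧
    (∀ w v u : List (Set σ × ℝ), IsTimedWord w → IsTimedWord v → IsTimedWord u →
      tdist w u ≤ tdist w v + tdist v u) :=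
  ⟨fun w _ => tdist_self w, fun w v _ _ => tdist_comm w v,
    fun w v u _ _ _ => tdist_triangle w v u⟩
end

section
/- For a regular language L over alphabet 2^Σ, the squeezed language 𝒮L (obtained by factorizing each word arbitrarily and replacing each factor by the union of its letters) is regular. -/
/-- The squeezing of a language over the powerset alphabet: each word of `L` is factorized
arbitrarily and each factor is replaced by the union of its letters. -/
def squeezeLang {σ : Type*} (L : Language (Set σ)) : Language (Set σ) :=
  {w | ∃ Ws : List (List (Set σ)), Ws.flatten ∈ L ∧
        w = Ws.map (fun f => f.foldr (· ∪ ·) ∅)}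

/-!
Squeezing is an instance of a more general operation: factorize a word of `L` arbitrarily and
replace each factor `f` by the letter `φ f`, for an arbitrary `φ : List α → β`. If a DFA `M`
recognizes `L`, the image is recognized by the NFA on the same states which reads a letter `b` by
jumping from `q` to `M.evalFrom q f` for any factor `f` with `φ f = b`. That NFA has finitely
many states, even though each of its transitions hides infinitely many factors.
-/

section

variable {α β σ : Type*}

def Language.mapFactors (φ : List α → β) (L : Language α) : Language β :=
  {x | ∃ Ws : List (List α), Ws.flatten ∈ L ∧ x = Ws.map φ}

namespace DFA

def factorNFA (M : DFA α σ) (φ : List α → β) : NFA β σ where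
  step q b := {q' | ∃ f, φ f = b ∧ M.evalFrom q f = q'}
  start := {M.start}
  accept := M.accept

theorem mem_factorNFA_evalFrom_singleton (M : DFA α σ) (φ : List α → β) (x : List β)
    (q q' : σ) :
    q' ∈ (M.factorNFA φ).evalFrom {q} x ↔
      ∃ Ws : List (List α), Ws.map φ = x ∧ M.evalFrom q Ws.flatten = q' := by
  induction x generalizing q with
  | nil => simp [eq_comm]
  | cons b x ih =>
    simp only [NFA.evalFrom_cons, NFA.stepSet_singleton, NFA.mem_evalFrom_iff_exists, ih,
      List.map_eq_cons_iff]
    constructor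
    · rintro ⟨_, ⟨f, rfl, rfl⟩, Ws, rfl, hq⟩
      exact ⟨f :: Ws, ⟨f, Ws, rfl, rfl, rfl⟩, by rwa [List.flatten_cons, evalFrom_of_append]⟩
    · rintro ⟨_, ⟨f, Ws, rfl, rfl, rfl⟩, hq⟩
      rw [List.flatten_cons, evalFrom_of_append] at hq
      exact ⟨_, ⟨f, rfl, rfl⟩, Ws, rfl, hq⟩

theorem factorNFA_accepts (M : DFA α σ) (φ : List α → β) :
    (M.factorNFA φ).accepts = M.accepts.mapFactors φ := by
  ext x
  rw [NFA.mem_accepts]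
  constructor
  · rintro ⟨q, hq, hx⟩
    obtain ⟨Ws, rfl, rfl⟩ := (M.mem_factorNFA_evalFrom_singleton φ x _ q).1 hx
    exact ⟨Ws, hq, rfl⟩
  · rintro ⟨Ws, hWs, rfl⟩
    exact ⟨_, hWs, (M.mem_factorNFA_evalFrom_singleton φ _ _ _).2 ⟨Ws, rfl, rfl⟩⟩

end DFA

theorem Language.IsRegular.mapFactors {L : Language α} (hL : L.IsRegular) (φ : List α → β) :
    (L.mapFactors φ).IsRegular := by
  obtain ⟨Q, _, M, rfl⟩ := hL
  exact ⟨Set Q, inferInstance, (M.factorNFA φ).toDFA,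
    by rw [NFA.toDFA_correct, M.factorNFA_accepts]⟩

end

theorem squeeze_regular_general {σ : Type*} (L : Language (Set σ))
    (hL : L.IsRegular) : (squeezeLang L).IsRegular :=
  hL.mapFactors _

/-- If `L` is regular then so is its squeezing `𝒮L`. -/
theorem squeeze_regular {σ : Type*} [Fintype σ] (L : Language (Set σ))
    (hL : L.IsRegular) : (squeezeLang L).IsRegular :=
  squeeze_regular_general L hL
end

section
/- Let f(n) be the number of n-letter words in the squeezed full language of a strongly connected finite automaton. Then f satisfies the almost-supermultiplicativity f(m+n+1) ≥ f(m)·f(n), and consequently lim_{n→∞} (log f(n))/n exists. -/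
open Filter

/-- The language of an NFA where all states are both initial and final. -/
def fullLang {σ Q : Type*} (A : NFA (Set σ) Q) : Language (Set σ) :=
  {w | ∃ p q : Q, q ∈ A.evalFrom {p} w}

/-- The number of `n`-letter words in the squeezed full language. -/
noncomputable def squeezeCount {σ Q : Type*} (A : NFA (Set σ) Q) (n : ℕ) : ℕ :=
  {w : List (Set σ) | w ∈ squeezeLang (fullLang A) ∧ w.length = n}.ncard

/-! Strong connectivity yields, between any two states, a run whose letters are exactly the
labels of `A`; squeezed into a single letter it reads `U = ⋃₀ A.labels`. Hence
`(v, w) ↦ v ++ U :: w` injects pairs of squeezed words of lengths `m` and `n` into those of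
length `m + n + 1`. The limit follows from Fekete's lemma applied to the subadditive sequence
`n ↦ -log f (n - 1)`. -/

open Topology Set

namespace NFA

variable {α Q : Type*} (A : NFA α Q)

def StronglyConnected : Prop := ∀ p q : Q, ∃ w : List α, q ∈ A.evalFrom {p} w

def labels : Set α := {a | ∃ p q, q ∈ A.step p a}

variable {A}

theorem mem_evalFrom_singleton_append {p r q : Q} {v w : List α}
    (hv : r ∈ A.evalFrom {p} v) (hw : q ∈ A.evalFrom {r} w) : q ∈ A.evalFrom {p} (v ++ w) := by
  rw [evalFrom_append, mem_evalFrom_iff_exists]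
  exact ⟨r, hv, hw⟩

theorem mem_evalFrom_singleton_cons_iff {p q : Q} {a : α} {w : List α} :
    q ∈ A.evalFrom {p} (a :: w) ↔ ∃ r ∈ A.step p a, q ∈ A.evalFrom {r} w := by
  rw [evalFrom_cons, stepSet_singleton, mem_evalFrom_iff_exists]

theorem mem_labels_of_mem_evalFrom {p q : Q} {a : α} {w : List α}
    (hw : q ∈ A.evalFrom {p} w) (ha : a ∈ w) : a ∈ A.labels := by
  induction w generalizing p with
  | nil => simp at ha
  | cons b w ih =>
    obtain ⟨r, hr, hw⟩ := mem_evalFrom_singleton_cons_iff.1 hw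
    rcases List.mem_cons.1 ha with rfl | ha
    · exact ⟨p, r, hr⟩
    · exact ih hw ha

theorem StronglyConnected.exists_evalFrom_forall_mem (hA : A.StronglyConnected) {l : List α}
    (hl : ∀ a ∈ l, a ∈ A.labels) (p q : Q) :
    ∃ w, q ∈ A.evalFrom {p} w ∧ ∀ a ∈ l, a ∈ w := by
  induction l generalizing p with
  | nil =>
    obtain ⟨w, hw⟩ := hA p q
    exact ⟨w, hw, by simp⟩
  | cons a l ih =>
    obtain ⟨p', q', ha⟩ := hl a List.mem_cons_self
    obtain ⟨v, hv⟩ := hA p p'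
    obtain ⟨w, hw, hlw⟩ := ih (fun b hb => hl b (List.mem_cons_of_mem a hb)) q'
    refine ⟨v ++ a :: w, mem_evalFrom_singleton_append hv
      (mem_evalFrom_singleton_cons_iff.2 ⟨q', ha, hw⟩), ?_⟩
    rintro b hb
    rcases List.mem_cons.1 hb with rfl | hb
    · exact List.mem_append_right v List.mem_cons_self
    · exact List.mem_append_right v (List.mem_cons_of_mem a (hlw b hb))

theorem StronglyConnected.exists_evalFrom_letters_eq_labels [Finite α]
    (hA : A.StronglyConnected) (p q : Q) :
    ∃ w, q ∈ A.evalFrom {p} w ∧ {a | a ∈ w} = A.labels := by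
  obtain ⟨s, hs⟩ := (toFinite A.labels).exists_finset_coe
  obtain ⟨w, hw, hsw⟩ := hA.exists_evalFrom_forall_mem (l := s.toList) (by simp [← hs]) p q
  exact ⟨w, hw, Subset.antisymm (fun a ha => mem_labels_of_mem_evalFrom hw ha)
    (fun a ha => hsw a (by simpa [← hs] using ha))⟩

end NFA

theorem List.foldr_union_eq_sUnion {σ : Type*} (l : List (Set σ)) :
    l.foldr (· ∪ ·) ∅ = ⋃₀ {B | B ∈ l} := by
  induction l with
  | nil => simp
  | cons B l ih => ext; simp [ih]

section Squeeze

variable {σ Q : Type*} {A : NFA (Set σ) Q}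

theorem nil_mem_squeezeLang_fullLang (q : Q) : [] ∈ squeezeLang (fullLang A) :=
  ⟨[], ⟨q, q, rfl⟩, rfl⟩

theorem squeezeLang_fullLang_append_sUnion_labels_cons [Finite σ] (hA : A.StronglyConnected)
    {v w : List (Set σ)} (hv : v ∈ squeezeLang (fullLang A)) (hw : w ∈ squeezeLang (fullLang A)) :
    v ++ ⋃₀ A.labels :: w ∈ squeezeLang (fullLang A) := by
  obtain ⟨Vs, ⟨p, p', hp⟩, rfl⟩ := hv
  obtain ⟨Ws, ⟨q', q, hq⟩, rfl⟩ := hw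
  obtain ⟨M, hM, hMlabels⟩ := hA.exists_evalFrom_letters_eq_labels p' q'
  refine ⟨Vs ++ M :: Ws, ⟨p, q, ?_⟩, ?_⟩
  · simpa using NFA.mem_evalFrom_singleton_append hp (NFA.mem_evalFrom_singleton_append hM hq)
  · simp [List.foldr_union_eq_sUnion M, hMlabels]

end Squeeze

theorem Language.ncard_length_eq_le_pow {α : Type*} [Fintype α] (L : Language α) (n : ℕ) :
    {w | w ∈ L ∧ w.length = n}.ncard ≤ Fintype.card α ^ n := by
  calc {w | w ∈ L ∧ w.length = n}.ncard ≤ {w : List α | w.length = n}.ncard :=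
        ncard_le_ncard (fun w hw => hw.2) (List.finite_length_eq α n)
    _ = Fintype.card (List.Vector α n) := by
        rw [← Nat.card_coe_set_eq, ← Nat.card_eq_fintype_card]; rfl
    _ = Fintype.card α ^ n := card_vector n

theorem Language.ncard_length_eq_zero {α : Type*} {L : Language α} (h : [] ∈ L) :
    {w | w ∈ L ∧ w.length = 0}.ncard = 1 := by
  rw [ncard_eq_one]
  exact ⟨[], ext fun w => ⟨fun hw => List.length_eq_zero_iff.1 hw.2, by rintro rfl; exact ⟨h, rfl⟩⟩⟩

theorem Language.ncard_length_eq_mul_le {α : Type*} [Finite α] {L : Language α} {c : α}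
    (hL : ∀ v ∈ L, ∀ w ∈ L, v ++ c :: w ∈ L) (m n : ℕ) :
    {w | w ∈ L ∧ w.length = m}.ncard * {w | w ∈ L ∧ w.length = n}.ncard ≤
      {w | w ∈ L ∧ w.length = m + n + 1}.ncard := by
  rw [← ncard_prod]
  refine ncard_le_ncard_of_injOn (fun x => x.1 ++ c :: x.2) ?_ ?_
    ((List.finite_length_eq α _).subset fun w hw => hw.2)
  · rintro ⟨v, w⟩ ⟨⟨hv, hvm⟩, hw, hwn⟩
    exact ⟨hL v hv w hw, by simp [hvm, hwn]; omega⟩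
  · rintro ⟨v, w⟩ ⟨⟨-, hvm⟩, -⟩ ⟨v', w'⟩ ⟨⟨-, hvm'⟩, -⟩ h
    obtain ⟨rfl, h'⟩ := List.append_inj h (hvm.trans hvm'.symm)
    simp_all

theorem exists_tendsto_div_of_add_le_add_one {a : ℕ → ℝ} {C : ℝ}
    (hsuper : ∀ m n, a m + a n ≤ a (m + n + 1)) (h0 : a 0 ≤ 0) (hle : ∀ n, a n ≤ n * C) :
    ∃ l, Tendsto (fun n : ℕ => a n / n) atTop (𝓝 l) := by
  set u : ℕ → ℝ := fun n => -a (n - 1) with hu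
  have hsub : Subadditive u := by
    rintro (_ | m) (_ | n)
    · simp [hu, h0]
    · simp [hu, h0]
    · simp [hu, h0]
    · have := hsuper m n
      simp only [hu, Nat.add_sub_cancel, show m + 1 + (n + 1) - 1 = m + n + 1 by omega]
      linarith
  have hbdd : BddBelow (range fun n => u n / n) := by
    refine ⟨-|C|, forall_mem_range.2 fun n => ?_⟩
    rcases n with _ | n
    · simp
    · rw [le_div_iff₀ (by positivity)]
      simp only [hu, Nat.add_sub_cancel]
      push_cast
      nlinarith [hle n, le_abs_self C, abs_nonneg C, (Nat.cast_nonneg n : (0 : ℝ) ≤ n)]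
  have hshift : Tendsto (fun n : ℕ => a n / (n + 1)) atTop (𝓝 (-hsub.lim)) := by
    have := ((tendsto_add_atTop_iff_nat 1).2 (hsub.tendsto_lim hbdd)).neg
    simpa [hu, neg_div] using this
  refine ⟨-hsub.lim, ?_⟩
  have hratio := hshift.div (tendsto_natCast_div_add_atTop (1 : ℝ)) one_ne_zero
  rw [div_one] at hratio
  refine hratio.congr' ?_
  filter_upwards [eventually_ne_atTop 0] with n hn
  have : (n : ℝ) ≠ 0 := Nat.cast_ne_zero.2 hn
  simp only [Pi.div_apply]
  field_simp

theorem exists_tendsto_log_div_of_mul_le {f : ℕ → ℕ} {K : ℕ} (h0 : f 0 = 1)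
    (hmul : ∀ m n, f m * f n ≤ f (m + n + 1)) (hle : ∀ n, f n ≤ K ^ n) :
    ∃ l, Tendsto (fun n : ℕ => Real.log (f n) / n) atTop (𝓝 l) := by
  have hpos : ∀ n, (0 : ℝ) < f n := by
    intro n
    induction n with
    | zero => simp [h0]
    | succ n ih =>
      have := hmul 0 n
      rw [h0, one_mul, zero_add] at this
      exact ih.trans_le (by exact_mod_cast this)
  refine exists_tendsto_div_of_add_le_add_one (C := Real.log K) (fun m n => ?_) (by simp [h0])
    (fun n => ?_)
  · rw [← Real.log_mul (hpos m).ne' (hpos n).ne']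
    exact Real.log_le_log (mul_pos (hpos m) (hpos n)) (by exact_mod_cast hmul m n)
  · rw [← Real.log_pow]
    exact Real.log_le_log (hpos n) (by exact_mod_cast hle n)

theorem squeezeCount_supermultiplicative_general {σ Q : Type*} [Fintype σ]
    (A : NFA (Set σ) Q)
    (hconn : ∀ p q : Q, ∃ w : List (Set σ), q ∈ A.evalFrom {p} w)
    (htrans : ∃ (p : Q) (B : Set σ) (q : Q), q ∈ A.step p B) :
    (∀ m n : ℕ, squeezeCount A m * squeezeCount A n ≤ squeezeCount A (m + n + 1)) ∧
    ∃ l : EReal, Tendsto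
      (fun n : ℕ => ((Real.log (squeezeCount A n) / n : ℝ) : EReal)) atTop (nhds l) := by
  classical
  obtain ⟨q, -, -, -⟩ := htrans
  have hmul : ∀ m n, squeezeCount A m * squeezeCount A n ≤ squeezeCount A (m + n + 1) :=
    Language.ncard_length_eq_mul_le fun _ hv _ hw =>
      squeezeLang_fullLang_append_sUnion_labels_cons hconn hv hw
  obtain ⟨l, hl⟩ := exists_tendsto_log_div_of_mul_le
    (Language.ncard_length_eq_zero (nil_mem_squeezeLang_fullLang q)) hmul
    (Language.ncard_length_eq_le_pow _)
  exact ⟨hmul, l, EReal.tendsto_coe.2 hl⟩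

/-- For a strongly connected finite automaton with at least one transition, the count
`f(n)` of `n`-letter squeezed words of the full language is almost supermultiplicative:
`f(m)·f(n) ≤ f(m+n+1)`; consequently `(log f(n))/n` converges (in the extended reals). -/
theorem squeezeCount_supermultiplicative {σ Q : Type*} [Fintype σ] [Fintype Q]
    (A : NFA (Set σ) Q)
    (hconn : ∀ p q : Q, ∃ w : List (Set σ), q ∈ A.evalFrom {p} w)
    (htrans : ∃ (p : Q) (B : Set σ) (q : Q), q ∈ A.step p B) :
    (∀ m n : ℕ, squeezeCount A m * squeezeCount A n ≤ squeezeCount A (m + n + 1)) ∧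
    ∃ l : EReal, Tendsto
      (fun n : ℕ => ((Real.log (squeezeCount A n) / n : ℝ) : EReal)) atTop (nhds l) :=
  squeezeCount_supermultiplicative_general A hconn htrans
end

section
/- Let G be a finite directed graph with edge rewards w(e) ≥ 0 and edge times t(e) ≥ 0 such that every cycle has total time ≥ 1, and let α > 0 be the maximum of w(C)/t(C) over all simple cycles C. Then there is a constant K such that every path π in G satisfies w(π) ≤ α·t(π) + K. -/
/-- `es` is a path in the directed multigraph given by `src`, `tgt`. -/
def IsGPath {V E : Type*} (src tgt : E → V) (es : List E) : Prop :=
  es.Chain' (fun a b => tgt a = src b)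

/-- `es` is a (nonempty) cycle. -/
def IsGCycle {V E : Type*} (src tgt : E → V) (es : List E) : Prop :=
  IsGPath src tgt es ∧ es ≠ [] ∧
    ∃ e₀ ∈ es.head?, ∃ e₁ ∈ es.getLast?, tgt e₁ = src e₀

/-- A simple cycle: a cycle visiting no vertex twice. -/
def IsSimpleGCycle {V E : Type*} (src tgt : E → V) (es : List E) : Prop :=
  IsGCycle src tgt es ∧ (es.map src).Nodup

/-!
Put `g e = w e - α * t e`. A simple cycle `C` has `t(C) ≥ 1 > 0`, so the maximality of `α`
gives `g(C) ≤ 0`. If the sources along a path repeat, the first repetition cuts the path into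
a simple cycle and a shorter path, so cutting out the cycle does not decrease `g`. What is left
in the end is a path with distinct edges, whose `g`-sum is at most `∑ e, |g e|`.
-/

namespace List

theorem exists_eq_append_cons_append_cons_of_not_nodup_map {α β : Type*} (f : α → β)
    {l : List α} (h : ¬(l.map f).Nodup) :
    ∃ a x b y c, l = a ++ x :: b ++ y :: c ∧ f x = f y ∧ ((x :: b).map f).Nodup := by
  induction l using reverseRecOn with
  | nil => simp at h
  | append_singleton l z ih =>
    by_cases hl : (l.map f).Nodup
    · have hz : f z ∈ l.map f := by
        by_contra hz
        exact h (by simpa [nodup_append, hl] using hz)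
      obtain ⟨x, hx, hxz⟩ := mem_map.mp hz
      obtain ⟨a, b, rfl⟩ := append_of_mem hx
      exact ⟨a, x, b, z, [], by simp, hxz,
        hl.sublist ((sublist_append_right _ _).map f)⟩
    · obtain ⟨a, x, b, y, c, rfl, hxy, hnd⟩ := ih hl
      exact ⟨a, x, b, y, c ++ [z], by simp, hxy, hnd⟩

theorem sum_map_le_sum_abs {α M : Type*} [Fintype α] [AddCommGroup M] [LinearOrder M]
    [IsOrderedAddMonoid M] (g : α → M) {l : List α} (hl : l.Nodup) :
    (l.map g).sum ≤ ∑ a, |g a| := by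
  classical
  rw [← sum_toFinset g hl]
  calc ∑ a ∈ l.toFinset, g a ≤ ∑ a ∈ l.toFinset, |g a| :=
        Finset.sum_le_sum fun a _ => le_abs_self (g a)
    _ ≤ ∑ a, |g a| :=
        Finset.sum_le_sum_of_subset_of_nonneg (Finset.subset_univ _)
          fun a _ _ => abs_nonneg (g a)

theorem sum_map_sub {ι M : Type*} [AddCommGroup M] (l : List ι) (f g : ι → M) :
    (l.map fun i => f i - g i).sum = (l.map f).sum - (l.map g).sum := by
  induction l with
  | nil => simp
  | cons i l ih => simp only [map_cons, sum_cons, ih]; abel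

end List

section

variable {V E : Type*} {src tgt : E → V}

theorem IsGPath.isGCycle_and_isGPath_of_src_eq {a b c : List E} {x y : E}
    (hp : IsGPath src tgt (a ++ x :: b ++ y :: c)) (hxy : src x = src y) :
    IsGCycle src tgt (x :: b) ∧ IsGPath src tgt (a ++ y :: c) := by
  change List.IsChain _ _ at hp
  rw [List.isChain_append, List.isChain_split] at hp
  obtain ⟨⟨hax, hxb⟩, hyc, hjoin⟩ := hp
  rw [List.getLast?_append_of_ne_nil _ (List.cons_ne_nil x b)] at hjoin
  have hlast := List.getLast?_eq_some_getLast (List.cons_ne_nil x b)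
  refine ⟨⟨hxb, List.cons_ne_nil x b, x, rfl, _, hlast, ?_⟩, ?_⟩
  · rw [hjoin _ hlast y rfl, hxy]
  · change List.IsChain _ _
    rw [List.isChain_split]
    refine ⟨?_, hyc⟩
    rw [List.isChain_append] at hax ⊢
    simpa [hxy] using hax

theorem IsGPath.sum_map_le_sum_abs [Fintype E] {M : Type*} [AddCommGroup M] [LinearOrder M]
    [IsOrderedAddMonoid M] (g : E → M)
    (hg : ∀ C, IsSimpleGCycle src tgt C → (C.map g).sum ≤ 0) {es : List E}
    (hp : IsGPath src tgt es) : (es.map g).sum ≤ ∑ e, |g e| := by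
  by_cases hnd : (es.map src).Nodup
  · exact List.sum_map_le_sum_abs g (hnd.of_map src)
  obtain ⟨a, x, b, y, c, rfl, hxy, hnodup⟩ :=
    List.exists_eq_append_cons_append_cons_of_not_nodup_map src hnd
  obtain ⟨hcycle, hrest⟩ := hp.isGCycle_and_isGPath_of_src_eq hxy
  calc ((a ++ x :: b ++ y :: c).map g).sum
      = ((x :: b).map g).sum + ((a ++ y :: c).map g).sum := by
        simp only [List.map_append, List.map_cons, List.sum_append, List.sum_cons]
        abel
    _ ≤ 0 + ∑ e, |g e| := add_le_add (hg _ ⟨hcycle, hnodup⟩) (hrest.sum_map_le_sum_abs g hg)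
    _ = ∑ e, |g e| := zero_add _
termination_by es.length
decreasing_by subst_vars; simp only [List.length_append, List.length_cons]; omega

end

theorem reward_le_ratio_mul_time_add_const_general {V E : Type*} [Fintype E]
    (src tgt : E → V) (w t : E → ℝ)
    (hcyc : ∀ es : List E, IsGCycle src tgt es → 1 ≤ (es.map t).sum)
    (α : ℝ)
    (hmax : IsGreatest
      {r : ℝ | ∃ es : List E, IsSimpleGCycle src tgt es ∧
        r = (es.map w).sum / (es.map t).sum} α) :
    ∃ K : ℝ, ∀ es : List E, IsGPath src tgt es →
      (es.map w).sum ≤ α * (es.map t).sum + K := by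
  have excess_sum (es : List E) :
      (es.map fun e => w e - α * t e).sum = (es.map w).sum - α * (es.map t).sum := by
    rw [List.sum_map_sub, List.sum_map_mul_left]
  have cycle_excess_nonpos (C : List E) (hC : IsSimpleGCycle src tgt C) :
      (C.map fun e => w e - α * t e).sum ≤ 0 := by
    have htime : 0 < (C.map t).sum := one_pos.trans_le (hcyc C hC.1)
    have hratio := (div_le_iff₀ htime).mp (hmax.2 ⟨C, hC, rfl⟩)
    rw [excess_sum]
    linarith
  refine ⟨∑ e, |w e - α * t e|, fun es hp => ?_⟩
  have hpath := hp.sum_map_le_sum_abs _ cycle_excess_nonpos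
  rw [excess_sum] at hpath
  linarith

/-- In a finite directed graph with nonnegative edge rewards and times where every cycle
takes time at least `1`, if `α > 0` is the maximum reward-to-time ratio over simple
cycles, then every path `π` satisfies `w(π) ≤ α·t(π) + K` for some constant `K`. -/
theorem reward_le_ratio_mul_time_add_const {V E : Type*} [Fintype V] [Fintype E]
    (src tgt : E → V) (w t : E → ℝ)
    (hw : ∀ e, 0 ≤ w e) (ht : ∀ e, 0 ≤ t e)
    (hcyc : ∀ es : List E, IsGCycle src tgt es → 1 ≤ (es.map t).sum)
    (α : ℝ) (hα : 0 < α)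
    (hmax : IsGreatest
      {r : ℝ | ∃ es : List E, IsSimpleGCycle src tgt es ∧
        r = (es.map w).sum / (es.map t).sum} α) :
    ∃ K : ℝ, ∀ es : List E, IsGPath src tgt es →
      (es.map w).sum ≤ α * (es.map t).sum + K :=
  reward_le_ratio_mul_time_add_const_general src tgt w t hcyc α hmax
end
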